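/- Let K be the stiffness matrix of a spring network in ℝ^d (d = 2 or 3) with a partition into terminals B and interior nodes I, let l_{ij} = l_{ji} be real perturbation coefficients with l_{ij} ≥ 0 whenever k_{ij} = 0, and let E be the matrix built from the coefficients l_{ij} by the same stiffness formula. For ε > 0 small enough that k_{ij} + εl_{ij} ≥ 0 for all i,j, let W(ε) = (K+εE)_BB − (K+εE)_BI ((K+εE)_II)† (K+εE)_IB be the static response matrix of the perturbed network. Then W(ε) converges to W = K_BB − K_BI K_II† K_IB as ε → 0⁺. -/

import Mathlib

open scoped BigOperators
open Matrix

noncomputable section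

/-- The Moore–Penrose pseudoinverse of a real square matrix, characterized by the
four Penrose conditions (it exists and is unique for every real matrix). -/
noncomputable def mpinv {n : Type*} [Fintype n] [DecidableEq n]
    (A : Matrix n n ℝ) : Matrix n n ℝ :=
  @dite _
    (∃ X : Matrix n n ℝ,
      A * X * A = A ∧ X * A * X = X ∧ (A * X)ᵀ = A * X ∧ (X * A)ᵀ = X * A)
    (Classical.propDecidable _) (fun h => h.choose) (fun _ => 0)

/-- Euclidean norm of a vector in `Fin d → ℝ`. -/
noncomputable def enorm {d : ℕ} (v : Fin d → ℝ) : ℝ := Real.sqrt (∑ a, v a ^ 2)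

/-- Unit vector pointing from `p` towards `q`. -/
noncomputable def unitDir {d : ℕ} (p q : Fin d → ℝ) : Fin d → ℝ :=
  fun a => (_root_.enorm (q - p))⁻¹ * (q a - p a)

/-- Stiffness matrix of a spring network with node positions `x` and spring
constants `k`: the `d × d` off-diagonal block coupling nodes `i ≠ j` is
`-k i j • n_{ij} n_{ij}ᵀ` and the `i`-th diagonal block is
`∑ j ≠ i, k i j • n_{ij} n_{ij}ᵀ`. -/
noncomputable def stiffness {d : ℕ} {ι : Type*} [Fintype ι] [DecidableEq ι]
    (x : ι → Fin d → ℝ) (k : ι → ι → ℝ) :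
    Matrix (ι × Fin d) (ι × Fin d) ℝ :=
  Matrix.of fun p q =>
    if p.1 = q.1 then
      ∑ j ∈ Finset.univ.filter (fun j => j ≠ p.1),
        k p.1 j * (unitDir (x p.1) (x j) p.2 * unitDir (x p.1) (x j) q.2)
    else
      -(k p.1 q.1 * (unitDir (x p.1) (x q.1) p.2 * unitDir (x p.1) (x q.1) q.2))

/-- `(x, k)` is a spring network: nodes are at distinct positions and the spring
constants are symmetric and nonnegative. -/
def IsSpringNetwork {d : ℕ} {ι : Type*} (x : ι → Fin d → ℝ) (k : ι → ι → ℝ) : Prop :=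
  Function.Injective x ∧ (∀ i j, k i j = k j i) ∧ (∀ i j, 0 ≤ k i j)

/-- The block of a matrix indexed by `(nodes × Fin d)` selected by the node
maps `f` and `g`. -/
def blk {d : ℕ} {ι κ₁ κ₂ : Type*} (K : Matrix (ι × Fin d) (ι × Fin d) ℝ)
    (f : κ₁ → ι) (g : κ₂ → ι) : Matrix (κ₁ × Fin d) (κ₂ × Fin d) ℝ :=
  K.submatrix (Prod.map f id) (Prod.map g id)

/-- Generalized Schur complement `K_BB - K_BI K_II† K_IB` eliminating the
interior nodes `I`. -/
noncomputable def schurResp {d : ℕ} {B I : Type*} [Fintype B] [Fintype I]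
    [DecidableEq B] [DecidableEq I]
    (K : Matrix ((B ⊕ I) × Fin d) ((B ⊕ I) × Fin d) ℝ) :
    Matrix (B × Fin d) (B × Fin d) ℝ :=
  blk K Sum.inl Sum.inl -
    blk K Sum.inl Sum.inr * mpinv (blk K Sum.inr Sum.inr) * blk K Sum.inr Sum.inl

/-- Static response matrix at the terminals `B` of the spring network `(x, k)`
with interior nodes `I`. -/
noncomputable def staticResponse {d : ℕ} {B I : Type*} [Fintype B] [Fintype I]
    [DecidableEq B] [DecidableEq I]
    (x : (B ⊕ I) → Fin d → ℝ) (k : (B ⊕ I) → (B ⊕ I) → ℝ) :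
    Matrix (B × Fin d) (B × Fin d) ℝ :=
  schurResp (stiffness x k)

/-- Balanced system of forces `f` supported at the points `x`: the total force
vanishes and the total torque vanishes (the torque being recorded as the
antisymmetric matrix `x_i ∧ f_i`, which for `d = 2` is equivalent to the scalar
wedge `u ∧ v = u 0 * v 1 - u 1 * v 0` and for `d = 3` to the cross product). -/
def IsBalanced {d : ℕ} {ι : Type*} [Fintype ι]
    (x f : ι → Fin d → ℝ) : Prop :=
  (∀ a, ∑ i, f i a = 0) ∧ ∀ a b, ∑ i, (x i a * f i b - x i b * f i a) = 0

/-- Planar wedge product. -/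
def wedge2 (u v : Fin 2 → ℝ) : ℝ := u 0 * v 1 - u 1 * v 0

/-- Cross product in `ℝ³`. -/
def cross3 (u v : Fin 3 → ℝ) : Fin 3 → ℝ :=
  ![u 1 * v 2 - u 2 * v 1, u 2 * v 0 - u 0 * v 2, u 0 * v 1 - u 1 * v 0]

/-- The `ε`-neighborhood `{y | dist (y, C) ≤ ε}` of a set `C` (for a closed set
`C`, membership is equivalent to being within Euclidean distance `ε` of some
point of `C`). -/
def epsNbhd {d : ℕ} (C : Set (Fin d → ℝ)) (ε : ℝ) : Set (Fin d → ℝ) :=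
  {y | ∃ z ∈ C, _root_.enorm (y - z) ≤ ε}

/-- Combine terminal and interior displacements into a displacement of all
nodes. -/
def glue {d : ℕ} {B I : Type*} (uB : B × Fin d → ℝ) (uI : I × Fin d → ℝ) :
    (B ⊕ I) × Fin d → ℝ :=
  fun p => Sum.elim (fun b => uB (b, p.2)) (fun i => uI (i, p.2)) p.1

/-- The reduced stiffness matrix `K̃` at the nodes `B ⊕ J` of a spring–mass
network with massless interior nodes `L`, obtained by eliminating `L`. -/
noncomputable def dynKtilde {d : ℕ} {B J L : Type*} [Fintype B] [Fintype J] [Fintype L]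
    [DecidableEq B] [DecidableEq J] [DecidableEq L]
    (x : ((B ⊕ J) ⊕ L) → Fin d → ℝ) (k : ((B ⊕ J) ⊕ L) → ((B ⊕ J) ⊕ L) → ℝ) :
    Matrix ((B ⊕ J) × Fin d) ((B ⊕ J) × Fin d) ℝ :=
  schurResp (stiffness x k)

/-- The diagonal mass matrix `M_JJ` of the interior nodes with mass. -/
noncomputable def massJJ {d : ℕ} {B J L : Type*} [Fintype J] [DecidableEq J]
    (m : (B ⊕ J) ⊕ L → ℝ) : Matrix (J × Fin d) (J × Fin d) ℝ :=
  Matrix.diagonal fun p => m (Sum.inl (Sum.inr p.1))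

/-- The diagonal mass matrix `M_BB` of the terminal nodes. -/
noncomputable def massBB {d : ℕ} {B J L : Type*} [Fintype B] [DecidableEq B]
    (m : (B ⊕ J) ⊕ L → ℝ) : Matrix (B × Fin d) (B × Fin d) ℝ :=
  Matrix.diagonal fun p => m (Sum.inl (Sum.inl p.1))

/-- Dynamic response function
`W(ω) = K̃_BB - ω² M_BB - K̃_BJ (K̃_JJ - ω² M_JJ)⁻¹ K̃_JB` of a spring–mass
network with terminals `B`, interior nodes `J` carrying the masses `m` and
massless interior nodes `L`. -/
noncomputable def dynResponse {d : ℕ} {B J L : Type*} [Fintype B] [Fintype J] [Fintype L]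
    [DecidableEq B] [DecidableEq J] [DecidableEq L]
    (x : ((B ⊕ J) ⊕ L) → Fin d → ℝ) (k : ((B ⊕ J) ⊕ L) → ((B ⊕ J) ⊕ L) → ℝ)
    (m : (B ⊕ J) ⊕ L → ℝ) (ω : ℝ) : Matrix (B × Fin d) (B × Fin d) ℝ :=
  blk (dynKtilde x k) Sum.inl Sum.inl - ω ^ 2 • massBB m -
    blk (dynKtilde x k) Sum.inl Sum.inr *
      (blk (dynKtilde x k) Sum.inr Sum.inr - ω ^ 2 • massJJ m)⁻¹ *
      blk (dynKtilde x k) Sum.inr Sum.inl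

/-!
For small `ε ≥ 0` the coefficients `k + ε l` are nonnegative, so `K + εE` is positive
semidefinite. For a positive semidefinite block matrix, the quadratic form of the Schur complement
built with the pseudoinverse is `u ↦ min_v q(u, v)`, the minimum being attained at the interior
equilibrium. Hence `ε ↦ uᵀ W(ε) u` is a pointwise minimum of functions affine in `ε`, which is
right-continuous at `0`, and polarization turns convergence of the quadratic forms into
convergence of the entries.
-/

open Filter Topology

section MoorePenrose
variable {n : Type*} [Fintype n] [DecidableEq n] {A X Y : Matrix n n ℝ}

def IsMoorePenroseInv (A X : Matrix n n ℝ) : Prop :=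
  A * X * A = A ∧ X * A * X = X ∧ (A * X)ᵀ = A * X ∧ (X * A)ᵀ = X * A

omit [DecidableEq n] in
theorem IsMoorePenroseInv.transpose (h : IsMoorePenroseInv A X) : IsMoorePenroseInv Aᵀ Xᵀ := by
  obtain ⟨h1, h2, h3, h4⟩ := h
  refine ⟨?_, ?_, ?_, ?_⟩ <;> simp only [← transpose_mul, Matrix.mul_assoc] at * <;>
    simp only [h1, h2, h3, h4]

omit [DecidableEq n] in
theorem IsMoorePenroseInv.unique (hX : IsMoorePenroseInv A X) (hY : IsMoorePenroseInv A Y) :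
    X = Y := by
  obtain ⟨hX1, hX2, hX3, hX4⟩ := hX
  obtain ⟨hY1, hY2, hY3, hY4⟩ := hY
  have hAX : A * X = A * Y := by
    calc A * X = (A * X)ᵀ := hX3.symm
    _ = (A * Y * A * X)ᵀ := by rw [hY1]
    _ = (A * X)ᵀ * (A * Y)ᵀ := by simp only [transpose_mul, Matrix.mul_assoc]
    _ = A * Y := by rw [hX3, hY3, ← Matrix.mul_assoc, hX1]
  have hXA : X * A = Y * A := by
    calc X * A = (X * A)ᵀ := hX4.symm
    _ = (X * (A * Y * A))ᵀ := by rw [hY1]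
    _ = (Y * A)ᵀ * (X * A)ᵀ := by simp only [transpose_mul, Matrix.mul_assoc]
    _ = Y * A := by rw [hY4, hX4, Matrix.mul_assoc, ← Matrix.mul_assoc A, hX1]
  calc X = X * A * X := hX2.symm
  _ = Y * A * Y := by rw [Matrix.mul_assoc, hAX, ← Matrix.mul_assoc, hXA]
  _ = Y := hY2

theorem isMoorePenroseInv_cfc_inv (hA : A.IsHermitian) :
    IsMoorePenroseInv A (cfc (·⁻¹ : ℝ → ℝ) A) := by
  have hcont (f : ℝ → ℝ) : ContinuousOn f (spectrum ℝ A) := (finite_spectrum A).continuousOn f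
  have hmul (f g : ℝ → ℝ) : cfc f A * cfc g A = cfc (fun t => f t * g t) A :=
    (cfc_mul f g A (hcont f) (hcont g)).symm
  have hsymm (f : ℝ → ℝ) : (cfc f A)ᵀ = cfc f A :=
    isHermitian_iff_isSymm.1 (IsSelfAdjoint.cfc (f := f) (a := A))
  have h : IsMoorePenroseInv (cfc (fun t : ℝ => t) A) (cfc (·⁻¹ : ℝ → ℝ) A) := by
    refine ⟨?_, ?_, ?_, ?_⟩ <;> simp only [hmul, hsymm, mul_inv_mul_cancel]
    simpa using congrArg (cfc · A) (funext fun t : ℝ => mul_inv_mul_cancel t⁻¹)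
  rwa [cfc_id' ℝ A] at h

theorem isMoorePenroseInv_mpinv (hA : A.IsHermitian) : IsMoorePenroseInv A (mpinv A) := by
  unfold mpinv
  split_ifs with h
  · exact h.choose_spec
  · exact absurd ⟨_, isMoorePenroseInv_cfc_inv hA⟩ h

theorem transpose_mpinv (hA : A.IsHermitian) : (mpinv A)ᵀ = mpinv A := by
  have h := (isMoorePenroseInv_mpinv hA).transpose
  rw [(isHermitian_iff_isSymm.1 hA).eq] at h
  exact h.unique (isMoorePenroseInv_mpinv hA)

theorem mulVec_mpinv_mulVec (hA : A.IsHermitian) {b : n → ℝ}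
    (hb : ∀ z, A *ᵥ z = 0 → b ⬝ᵥ z = 0) : A *ᵥ (mpinv A *ᵥ b) = b := by
  obtain ⟨h1, -, h3, -⟩ := isMoorePenroseInv_mpinv hA
  have hAt : Aᵀ = A := (isHermitian_iff_isSymm.1 hA).eq
  have hcomm : A * mpinv A = mpinv A * A := by
    rw [← h3, transpose_mul, hAt, transpose_mpinv hA]
  set z := b - A *ᵥ (mpinv A *ᵥ b)
  have hz : A *ᵥ z = 0 := by
    rw [mulVec_sub, mulVec_mulVec, mulVec_mulVec, Matrix.mul_assoc, hcomm, ← Matrix.mul_assoc, h1,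
      sub_self]
  have hzz : z ⬝ᵥ z = 0 := by
    rw [sub_dotProduct, hb z hz, dotProduct_comm, dotProduct_mulVec, ← mulVec_transpose, hAt, hz,
      zero_dotProduct, sub_zero]
  exact (sub_eq_zero.1 (dotProduct_self_eq_zero.1 hzz)).symm
end MoorePenrose

/-- `Q` is a minimum of affine functions of `ε`, hence concave: near `0⁺` it lies above its chord
over `[0, ε₀]` and below the affine function through a minimiser at `ε = 0`. -/
theorem tendsto_nhdsGT_of_eventually_isLeast_add_mul {ι : Type*} {a b : ι → ℝ} {Q : ℝ → ℝ}
    (h : ∀ᶠ ε in 𝓝[≥] (0 : ℝ), IsLeast (Set.range fun v => a v + ε * b v) (Q ε)) :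
    Tendsto Q (𝓝[>] 0) (𝓝 (Q 0)) := by
  obtain ⟨ε₀, hε₀, hsub⟩ := mem_nhdsGE_iff_exists_Icc_subset.1 h
  have hleast {ε : ℝ} (hε : ε ∈ Set.Icc 0 ε₀) (v : ι) : Q ε ≤ a v + ε * b v :=
    (hsub hε).2 ⟨v, rfl⟩
  obtain ⟨v₀, hv₀⟩ := (hsub ⟨le_rfl, hε₀.le⟩).1
  have hupper (ε : ℝ) (hε : ε ∈ Set.Icc 0 ε₀) : Q ε ≤ Q 0 + ε * b v₀ := by
    simpa [← hv₀] using hleast hε v₀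
  have hlower (ε : ℝ) (hε : ε ∈ Set.Icc 0 ε₀) : Q 0 + ε * ((Q ε₀ - Q 0) / ε₀) ≤ Q ε := by
    obtain ⟨v, hv⟩ := (hsub hε).1
    have h0 := hleast ⟨le_rfl, hε₀.le⟩ v
    have h1 := hleast ⟨hε₀.le, le_rfl⟩ v
    rw [← hv, mul_div_assoc', add_div' _ _ _ hε₀.ne', div_le_iff₀ hε₀]
    nlinarith [mul_le_mul_of_nonneg_left h0 (sub_nonneg.2 hε.2), mul_le_mul_of_nonneg_left h1 hε.1]
  have hlim (c : ℝ) : Tendsto (fun ε => Q 0 + ε * c) (𝓝[>] 0) (𝓝 (Q 0)) :=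
    tendsto_nhdsWithin_of_tendsto_nhds <| by
      simpa using ((tendsto_id (x := 𝓝 (0 : ℝ))).mul_const c).const_add (Q 0)
  have hIcc : ∀ᶠ ε in 𝓝[>] (0 : ℝ), ε ∈ Set.Icc 0 ε₀ :=
    mem_of_superset (Ioc_mem_nhdsGT hε₀) Set.Ioc_subset_Icc_self
  exact tendsto_of_tendsto_of_tendsto_of_le_of_le' (hlim _) (hlim _)
    (hIcc.mono hlower) (hIcc.mono hupper)

theorem eventually_nonneg_add_mul {a b : ℝ} (ha : 0 ≤ a) (hb : a = 0 → 0 ≤ b) :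
    ∀ᶠ ε in 𝓝[≥] (0 : ℝ), 0 ≤ a + ε * b := by
  rcases ha.eq_or_lt with rfl | ha
  · filter_upwards [self_mem_nhdsWithin] with ε (hε : 0 ≤ ε)
    simpa using mul_nonneg hε (hb rfl)
  · have h : Tendsto (fun ε => a + ε * b) (𝓝 0) (𝓝 a) := by
      simpa using ((tendsto_id (x := 𝓝 (0 : ℝ))).mul_const b).const_add a
    exact nhdsWithin_le_nhds ((h.eventually (lt_mem_nhds ha)).mono fun _ h => h.le)

section Polarization
variable {m : Type*} [Fintype m] [DecidableEq m]

theorem Matrix.IsHermitian.apply_eq_polarization {S : Matrix m m ℝ} (hS : S.IsHermitian)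
    (i j : m) :
    S i j = ((Pi.single i 1 + Pi.single j 1) ⬝ᵥ S *ᵥ (Pi.single i 1 + Pi.single j 1)
      - Pi.single i 1 ⬝ᵥ S *ᵥ Pi.single i 1 - Pi.single j 1 ⬝ᵥ S *ᵥ Pi.single j 1) / 2 := by
  have hji : S j i = S i j := hS.apply i j
  simp only [mulVec_add, add_dotProduct, dotProduct_add, mulVec_single_one, single_one_dotProduct,
    col_apply]
  linarith

theorem tendsto_of_tendsto_dotProduct_mulVec_self {α : Type*} {l : Filter α}
    {S : α → Matrix m m ℝ} {S₀ : Matrix m m ℝ}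
    (hS : ∀ᶠ x in l, (S x).IsHermitian) (hS₀ : S₀.IsHermitian)
    (h : ∀ u, Tendsto (fun x => u ⬝ᵥ S x *ᵥ u) l (𝓝 (u ⬝ᵥ S₀ *ᵥ u))) : Tendsto S l (𝓝 S₀) := by
  refine tendsto_pi_nhds.2 fun i => tendsto_pi_nhds.2 fun j => ?_
  rw [hS₀.apply_eq_polarization]
  refine Tendsto.congr' (hS.mono fun x hx => (hx.apply_eq_polarization i j).symm) ?_
  exact (((h _).sub (h _)).sub (h _)).div_const 2
end Polarization

section SchurComplement
variable {m n : Type*} [Fintype m] [Fintype n] [DecidableEq n]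

noncomputable def pinvSchurCompl (M : Matrix (m ⊕ n) (m ⊕ n) ℝ) : Matrix m m ℝ :=
  M.toBlocks₁₁ - M.toBlocks₁₂ * mpinv M.toBlocks₂₂ * M.toBlocks₂₁

omit [DecidableEq n] in
theorem sumElim_dotProduct_mulVec_sumElim {R : Type*} [NonUnitalNonAssocSemiring R]
    (M : Matrix (m ⊕ n) (m ⊕ n) R) (u : m → R) (v : n → R) :
    Sum.elim u v ⬝ᵥ M *ᵥ Sum.elim u v = u ⬝ᵥ M.toBlocks₁₁ *ᵥ u + u ⬝ᵥ M.toBlocks₁₂ *ᵥ v +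
      (v ⬝ᵥ M.toBlocks₂₁ *ᵥ u + v ⬝ᵥ M.toBlocks₂₂ *ᵥ v) := by
  conv_lhs => rw [← fromBlocks_toBlocks M]
  rw [fromBlocks_mulVec, sumElim_dotProduct_sumElim, dotProduct_add, dotProduct_add,
    Sum.elim_comp_inl, Sum.elim_comp_inr]

omit [Fintype m] [Fintype n] [DecidableEq n] in
theorem Matrix.IsHermitian.transpose_toBlocks₁₂ {M : Matrix (m ⊕ n) (m ⊕ n) ℝ}
    (hM : M.IsHermitian) : M.toBlocks₁₂ᵀ = M.toBlocks₂₁ := by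
  ext i j
  exact hM.apply (Sum.inr i) (Sum.inl j)

theorem Matrix.IsHermitian.dotProduct_mulVec_sumElim_eq_pinvSchurCompl_add
    {M : Matrix (m ⊕ n) (m ⊕ n) ℝ} (hM : M.IsHermitian) (u : m → ℝ) (v : n → ℝ)
    (hb : M.toBlocks₂₂ *ᵥ (mpinv M.toBlocks₂₂ *ᵥ (M.toBlocks₂₁ *ᵥ u)) = M.toBlocks₂₁ *ᵥ u) :
    Sum.elim u v ⬝ᵥ M *ᵥ Sum.elim u v = u ⬝ᵥ pinvSchurCompl M *ᵥ u +
      (v + mpinv M.toBlocks₂₂ *ᵥ (M.toBlocks₂₁ *ᵥ u)) ⬝ᵥ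
        M.toBlocks₂₂ *ᵥ (v + mpinv M.toBlocks₂₂ *ᵥ (M.toBlocks₂₁ *ᵥ u)) := by
  have hD : M.toBlocks₂₂.IsHermitian := hM.submatrix Sum.inr
  set D := M.toBlocks₂₂
  set X := mpinv D
  set b := M.toBlocks₂₁ *ᵥ u
  have hBu (w : n → ℝ) : u ⬝ᵥ M.toBlocks₁₂ *ᵥ w = b ⬝ᵥ w := by
    rw [dotProduct_mulVec, ← mulVec_transpose, hM.transpose_toBlocks₁₂]
  have hDsymm (w w' : n → ℝ) : w ⬝ᵥ D *ᵥ w' = w' ⬝ᵥ D *ᵥ w := by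
    rw [dotProduct_comm, dotProduct_mulVec, ← mulVec_transpose, (isHermitian_iff_isSymm.1 hD).eq]
  have hXb : (X *ᵥ b) ⬝ᵥ D *ᵥ (X *ᵥ b) = b ⬝ᵥ X *ᵥ b := by
    rw [hb, dotProduct_comm]
  rw [sumElim_dotProduct_mulVec_sumElim, pinvSchurCompl, sub_mulVec, dotProduct_sub,
    ← mulVec_mulVec, ← mulVec_mulVec, hBu, hBu, dotProduct_comm v b, mulVec_add, dotProduct_add,
    add_dotProduct, add_dotProduct, hXb, hDsymm (X *ᵥ b) v, hb, dotProduct_comm v b]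
  ring

theorem Matrix.PosSemidef.isLeast_pinvSchurCompl {M : Matrix (m ⊕ n) (m ⊕ n) ℝ}
    (hM : M.PosSemidef) (u : m → ℝ) :
    IsLeast (Set.range fun v => Sum.elim u v ⬝ᵥ M *ᵥ Sum.elim u v)
      (u ⬝ᵥ pinvSchurCompl M *ᵥ u) := by
  have hD : M.toBlocks₂₂.PosSemidef := hM.submatrix Sum.inr
  have hb : ∀ z, M.toBlocks₂₂ *ᵥ z = 0 → (M.toBlocks₂₁ *ᵥ u) ⬝ᵥ z = 0 := by
    intro z hz
    have hw : M *ᵥ Sum.elim 0 z = 0 := by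
      rw [← hM.dotProduct_mulVec_zero_iff, star_trivial, sumElim_dotProduct_mulVec_sumElim, hz]
      simp
    have hBz : M.toBlocks₁₂ *ᵥ z = 0 := by
      ext i
      simpa [mulVec, dotProduct, Fintype.sum_sum_type, toBlocks₁₂] using congrFun hw (Sum.inl i)
    rw [dotProduct_comm, dotProduct_mulVec, ← mulVec_transpose, ← hM.1.transpose_toBlocks₁₂,
      transpose_transpose, hBz, zero_dotProduct]
  have hsq := hM.1.dotProduct_mulVec_sumElim_eq_pinvSchurCompl_add u
    (hb := mulVec_mpinv_mulVec hD.1 hb)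
  refine ⟨⟨-(mpinv M.toBlocks₂₂ *ᵥ (M.toBlocks₂₁ *ᵥ u)), ?_⟩, ?_⟩
  · simp [hsq]
  · rintro _ ⟨v, rfl⟩
    dsimp only
    rw [hsq]
    simpa using hD.dotProduct_mulVec_nonneg (v + mpinv M.toBlocks₂₂ *ᵥ (M.toBlocks₂₁ *ᵥ u))

omit [Fintype m] in
theorem Matrix.IsHermitian.pinvSchurCompl {M : Matrix (m ⊕ n) (m ⊕ n) ℝ} (hM : M.IsHermitian) :
    (pinvSchurCompl M).IsHermitian := by
  have hA : M.toBlocks₁₁ᵀ = M.toBlocks₁₁ := (isHermitian_iff_isSymm.1 (hM.submatrix Sum.inl)).eq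
  have hBC : M.toBlocks₁₂ᵀ = M.toBlocks₂₁ := hM.transpose_toBlocks₁₂
  have hCB : M.toBlocks₂₁ᵀ = M.toBlocks₁₂ := by rw [← hBC, transpose_transpose]
  have hD : M.toBlocks₂₂.IsHermitian := hM.submatrix Sum.inr
  rw [isHermitian_iff_isSymm, IsSymm, _root_.pinvSchurCompl, transpose_sub, transpose_mul,
    transpose_mul, transpose_mpinv hD, hA, hBC, hCB, Matrix.mul_assoc]

theorem tendsto_pinvSchurCompl_add_smul [DecidableEq m] {M E : Matrix (m ⊕ n) (m ⊕ n) ℝ}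
    (h : ∀ᶠ ε in 𝓝[≥] (0 : ℝ), (M + ε • E).PosSemidef) :
    Tendsto (fun ε : ℝ => pinvSchurCompl (M + ε • E)) (𝓝[>] 0) (𝓝 (pinvSchurCompl M)) := by
  have hM : M.PosSemidef := by simpa using h.self_of_nhdsWithin Set.self_mem_Ici
  have hpos : ∀ᶠ ε in 𝓝[>] (0 : ℝ), (M + ε • E).PosSemidef :=
    nhdsWithin_mono 0 Set.Ioi_subset_Ici_self h
  refine tendsto_of_tendsto_dotProduct_mulVec_self (hpos.mono fun ε hε => hε.1.pinvSchurCompl)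
    hM.1.pinvSchurCompl fun u => ?_
  have hleast := h.mono fun ε hε => by
    simpa [add_mulVec, smul_mulVec] using hε.isLeast_pinvSchurCompl u
  simpa using tendsto_nhdsGT_of_eventually_isLeast_add_mul hleast
end SchurComplement

section Stiffness
variable {d : ℕ} {ι : Type*} [Fintype ι] [DecidableEq ι]

theorem unitDir_self (p : Fin d → ℝ) : unitDir p p = 0 := by
  ext a
  simp [unitDir]

theorem unitDir_swap (p q : Fin d → ℝ) : unitDir q p = -unitDir p q := by
  have h : _root_.enorm (p - q) = _root_.enorm (q - p) := by
    simp only [_root_.enorm, Pi.sub_apply, ← neg_sub (q _) (p _), neg_sq]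
  ext a
  simp only [unitDir, h, Pi.neg_apply, ← neg_sub (q a) (p a), mul_neg]

theorem stiffness_apply (x : ι → Fin d → ℝ) (k : ι → ι → ℝ) (a b : ι) (α β : Fin d) :
    stiffness x k (a, α) (b, β) =
      (if a = b then ∑ j, k a j * (unitDir (x a) (x j) α * unitDir (x a) (x j) β) else 0) -
        k a b * (unitDir (x a) (x b) α * unitDir (x a) (x b) β) := by
  simp only [stiffness, of_apply]
  split_ifs with hab
  · subst hab
    rw [Finset.filter_ne', Finset.sum_erase _ (by simp [unitDir_self]), unitDir_self]
    simp
  · simp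

theorem stiffness_add_smul (x : ι → Fin d → ℝ) (k l : ι → ι → ℝ) (ε : ℝ) :
    stiffness x k + ε • stiffness x l = stiffness x fun i j => k i j + ε * l i j := by
  ext ⟨a, α⟩ ⟨b, β⟩
  simp only [Matrix.add_apply, Matrix.smul_apply, stiffness_apply, smul_eq_mul]
  split_ifs
  · simp only [add_mul, Finset.sum_add_distrib, mul_assoc, ← Finset.mul_sum]
    ring
  · ring

/-- The elongation of the spring `ij` under a displacement `w` is `springVec x i j ⬝ᵥ w`. -/
def springVec (x : ι → Fin d → ℝ) (i j : ι) : ι × Fin d → ℝ :=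
  fun p => ((if p.1 = i then 1 else 0) - (if p.1 = j then 1 else 0)) * unitDir (x i) (x j) p.2

theorem two_smul_stiffness (x : ι → Fin d → ℝ) {k : ι → ι → ℝ} (hk : ∀ i j, k i j = k j i) :
    (2 : ℝ) • stiffness x k =
      ∑ i, ∑ j, k i j • vecMulVec (springVec x i j) (springVec x i j) := by
  ext ⟨a, α⟩ ⟨b, β⟩
  set f : ι → ι → ℝ := fun i j => k i j * (unitDir (x i) (x j) α * unitDir (x i) (x j) β)
    with hf
  have hfsymm (i j : ι) : f j i = f i j := by
    simp only [hf, hk j i, unitDir_swap (x i), Pi.neg_apply]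
    ring
  have hentry (i j : ι) : k i j • vecMulVec (springVec x i j) (springVec x i j) (a, α) (b, β) =
      ((if a = i then 1 else 0) - (if a = j then 1 else 0)) *
        ((if b = i then 1 else 0) - (if b = j then 1 else 0)) * f i j := by
    simp only [smul_eq_mul, vecMulVec_apply, springVec, hf]
    ring
  simp only [Matrix.smul_apply, Matrix.sum_apply, hentry, stiffness_apply, sub_mul, mul_sub,
    ite_mul, one_mul, zero_mul, Finset.sum_sub_distrib, Finset.sum_ite_irrel,
    Finset.sum_const_zero, Finset.sum_ite_eq, Finset.mem_univ, if_true]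
  change (2 : ℝ) • ((if a = b then ∑ j, f a j else 0) - f a b) = _
  rw [hfsymm b a, Fintype.sum_congr _ _ fun i => hfsymm a i]
  by_cases hab : a = b
  · subst hab
    simp only [if_true, smul_eq_mul]
    ring
  · simp only [hab, Ne.symm hab, if_false, smul_eq_mul]
    ring

theorem stiffness_posSemidef (x : ι → Fin d → ℝ) {k : ι → ι → ℝ} (hk : ∀ i j, k i j = k j i)
    (hk0 : ∀ i j, 0 ≤ k i j) : (stiffness x k).PosSemidef := by
  have h2 : ((2 : ℝ) • stiffness x k).PosSemidef := by
    rw [two_smul_stiffness x hk]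
    exact posSemidef_sum _ fun i _ => posSemidef_sum _ fun j _ => by
      simpa using (posSemidef_vecMulVec_self_star (springVec x i j)).smul (hk0 i j)
  simpa using h2.smul (show (0 : ℝ) ≤ 1 / 2 by norm_num)
end Stiffness

theorem tendsto_schurResp_add_smul {d : ℕ} {B I : Type*} [Fintype B] [Fintype I] [DecidableEq B]
    [DecidableEq I] {K E : Matrix ((B ⊕ I) × Fin d) ((B ⊕ I) × Fin d) ℝ}
    (h : ∀ᶠ ε in 𝓝[≥] (0 : ℝ), (K + ε • E).PosSemidef) :
    Tendsto (fun ε : ℝ => schurResp (K + ε • E)) (𝓝[>] 0) (𝓝 (schurResp K)) :=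
  let e := (Equiv.sumProdDistrib B I (Fin d)).symm
  tendsto_pinvSchurCompl_add_smul (M := K.submatrix e e) (E := E.submatrix e e)
    (h.mono fun _ hε => hε.submatrix e)

theorem static_response_stability_general {d : ℕ}
    {B I : Type*} [Fintype B] [Fintype I] [DecidableEq B] [DecidableEq I]
    (x : (B ⊕ I) → Fin d → ℝ) (k l : (B ⊕ I) → (B ⊕ I) → ℝ)
    (hnet : IsSpringNetwork x k)
    (hlsymm : ∀ i j, l i j = l j i)
    (hlnew : ∀ i j, k i j = 0 → 0 ≤ l i j) :
    Filter.Tendsto (fun ε : ℝ => schurResp (stiffness x k + ε • stiffness x l))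
      (nhdsWithin 0 (Set.Ioi 0))
      (nhds (schurResp (stiffness x k))) := by
  obtain ⟨-, hk, hk0⟩ := hnet
  refine tendsto_schurResp_add_smul ?_
  have hnonneg : ∀ᶠ ε in 𝓝[≥] (0 : ℝ), ∀ i j, 0 ≤ k i j + ε * l i j :=
    eventually_all.2 fun i => eventually_all.2 fun j =>
      eventually_nonneg_add_mul (hk0 i j) (hlnew i j)
  filter_upwards [hnonneg] with ε hε
  rw [stiffness_add_smul]
  exact stiffness_posSemidef x (fun i j => by rw [hk, hlsymm]) hε

/-- stability of the static response: the response of the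
perturbed network `K + εE` converges to the response of the unperturbed network
as `ε → 0⁺`. -/
theorem static_response_stability {d : ℕ} (hd : d = 2 ∨ d = 3)
    {B I : Type*} [Fintype B] [Fintype I] [DecidableEq B] [DecidableEq I]
    (x : (B ⊕ I) → Fin d → ℝ) (k l : (B ⊕ I) → (B ⊕ I) → ℝ)
    (hnet : IsSpringNetwork x k)
    (hlsymm : ∀ i j, l i j = l j i)
    (hlnew : ∀ i j, k i j = 0 → 0 ≤ l i j) :
    Filter.Tendsto (fun ε : ℝ => schurResp (stiffness x k + ε • stiffness x l))
      (nhdsWithin 0 (Set.Ioi 0))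
      (nhds (schurResp (stiffness x k))) :=
  static_response_stability_general x k l hnet hlsymm hlnew
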